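/- arXiv:1304.6853 — 3 statements merged into one kernel-verified Lean document; each statement's English description precedes it below -/
import Mathlib

section
/- Let n ≥ 1, let u ∈ ℝ \ {0}, and let K_{iu}(x) = π^{−n/2} 2^{−iu} Γ((n − iu)/2)/Γ(iu/2) · |x|^{−n+iu} be the convolution kernel of I_{iu}. Then there is a constant C, depending only on n, such that |K_{iu}(x)| ≤ C (1 + |u|)^{n/2} |x|^{−n} for all x ∈ ℝ^n \ {0} and all u ∈ ℝ \ {0}. -/
open MeasureTheory Metric Filter Topology
open scoped ENNReal FourierTransform SchwartzMap

noncomputable section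

/-- Euclidean space `ℝⁿ`. -/
abbrev Rn (n : ℕ) := EuclideanSpace ℝ (Fin n)

/-- The modular `ρ_{p(·)}(f)` of the variable Lebesgue space `L^{p(·)}(ℝⁿ)`:
`∫_{ℝⁿ \ ℝⁿ_∞} |f|^{p(x)} dx + ‖f‖_{L^∞(ℝⁿ_∞)}`, where `ℝⁿ_∞ = {p = ∞}`. -/
def varModular {n : ℕ} {E : Type*} [NormedAddCommGroup E]
    (p : Rn n → ℝ≥0∞) (f : Rn n → E) : ℝ≥0∞ :=
  (∫⁻ x in {x | p x ≠ ∞}, ENNReal.ofReal ‖f x‖ ^ (p x).toReal) +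
    essSup (fun x => ENNReal.ofReal ‖f x‖) (volume.restrict {x | p x = ∞})

/-- The Luxemburg norm `‖f‖_{p(·)} = inf {λ > 0 : ρ_{p(·)}(f/λ) ≤ 1}`. -/
def varNorm {n : ℕ} {E : Type*} [NormedAddCommGroup E]
    (p : Rn n → ℝ≥0∞) (f : Rn n → E) : ℝ :=
  sInf {c : ℝ | 0 < c ∧ varModular p (fun x => ‖f x‖ / c) ≤ 1}

/-- Membership in the variable Lebesgue space `L^{p(·)}(ℝⁿ)`. -/
def MemVarLp {n : ℕ} {E : Type*} [NormedAddCommGroup E]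
    (p : Rn n → ℝ≥0∞) (f : Rn n → E) : Prop :=
  AEStronglyMeasurable f volume ∧ ∃ c : ℝ, 0 < c ∧ varModular p (fun x => ‖f x‖ / c) < ∞

/-- The Hardy–Littlewood maximal function `Mf(x) = sup_{r>0} |B(x,r)|⁻¹ ∫_{B(x,r)} |f|`. -/
def hlMax {n : ℕ} {E : Type*} [NormedAddCommGroup E] (f : Rn n → E) (x : Rn n) : ℝ :=
  ⨆ r : {r : ℝ // 0 < r},
    ((volume (ball x r.1)).toReal)⁻¹ * ∫ y in ball x r.1, ‖f y‖

/-- The class `B(ℝⁿ)` of variable exponents `p : ℝⁿ → [1,∞]` for which the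
Hardy–Littlewood maximal operator is bounded on `L^{p(·)}(ℝⁿ)`. -/
def MemClassB {n : ℕ} (p : Rn n → ℝ≥0∞) : Prop :=
  Measurable p ∧ (∀ x, 1 ≤ p x) ∧
    ∃ C : ℝ, 0 < C ∧ ∀ f : Rn n → ℝ, MemVarLp p f →
      varNorm p (hlMax f) ≤ C * varNorm p f

/-- The class `P^log(ℝⁿ)`: variable exponents `p : ℝⁿ → [1,∞]` such that `1/p` is
globally log-Hölder continuous (locally log-Hölder plus log-Hölder decay). -/
def MemPLog {n : ℕ} (p : Rn n → ℝ≥0∞) : Prop :=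
  Measurable p ∧ (∀ x, 1 ≤ p x) ∧
    (∃ c₁ : ℝ, 0 < c₁ ∧ ∀ x y : Rn n, dist x y < 1/2 →
      |((p x)⁻¹).toReal - ((p y)⁻¹).toReal| ≤ c₁ / Real.log (Real.exp 1 + (dist x y)⁻¹)) ∧
    (∃ pinf c₂ : ℝ, 0 < c₂ ∧ ∀ x : Rn n,
      |((p x)⁻¹).toReal - pinf| ≤ c₂ / Real.log (Real.exp 1 + ‖x‖))

/-- The Fourier multiplier `(2π|ξ|)^{-iu}` of the imaginary power `I_{iu} = (-Δ)^{-iu/2}`. -/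
def impMult {n : ℕ} (u : ℝ) (ξ : Rn n) : ℂ :=
  ((2 * Real.pi * ‖ξ‖ : ℝ) : ℂ) ^ (-(Complex.I * u))

/-- A weight `w` on `ℝⁿ` belongs to the Muckenhoupt class `A_p` with constant (at most) `A`:
it is nonnegative, locally integrable, and
`(|B|⁻¹∫_B w)·(|B|⁻¹∫_B w^{1-p'})^{p-1} ≤ A` for every ball `B`, where `p' = p/(p-1)`
(so that `1 - p' = -1/(p-1)`). -/
def IsAp {n : ℕ} (p : ℝ) (w : Rn n → ℝ) (A : ℝ) : Prop :=
  (∀ x, 0 ≤ w x) ∧ LocallyIntegrable w volume ∧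
    ∀ (x : Rn n) (r : ℝ), 0 < r →
      (((volume (ball x r)).toReal)⁻¹ * ∫ y in ball x r, w y) *
        (((volume (ball x r)).toReal)⁻¹ * ∫ y in ball x r, (w y) ^ (-(p - 1)⁻¹)) ^ (p - 1) ≤ A

/-- The weighted Lebesgue norm `‖f‖_{p,w} = (∫ |f|^p w dx)^{1/p}`. -/
def wNorm {n : ℕ} (p : ℝ) (w : Rn n → ℝ) (f : Rn n → ℂ) : ℝ :=
  (∫ x : Rn n, ‖f x‖ ^ p * w x) ^ (1 / p)

/-- The Bessel function of the first kind of order `ν`. -/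
def besselJ (ν x : ℝ) : ℝ :=
  ∑' m : ℕ, ((-1 : ℝ) ^ m / (m.factorial * Real.Gamma (m + ν + 1))) * (x / 2) ^ (2 * m + ν)

/-- `F_α(λ) = π^{-α+1} λ^{-n/2-α+1} J_{n/2+α-1}(2πλ)`, the Fourier multiplier profile of the
spherical mean operator `M_t^α` (meaningful for `λ > 0`). -/
def sphF (n : ℕ) (α l : ℝ) : ℝ :=
  Real.pi ^ (-α + 1) * l ^ (-(n : ℝ)/2 - α + 1) * besselJ ((n : ℝ)/2 + α - 1) (2 * Real.pi * l)

/-- The spherical maximal function `M^α f(x) = sup_{t>0} |M_t^α f(x)|` associated with a family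
`S` of spherical mean operators (`S t f = M_t^α f`). -/
def sphMax {n : ℕ} (S : ℝ → 𝓢(Rn n, ℂ) → (Rn n → ℂ)) (f : 𝓢(Rn n, ℂ)) (x : Rn n) : ℝ :=
  ⨆ t : {t : ℝ // 0 < t}, ‖S t.1 f x‖

/-- The convolution kernel `K_{iu}(x) = π^{-n/2} 2^{-iu} Γ((n-iu)/2)/Γ(iu/2) · |x|^{-n+iu}`
of the imaginary power `I_{iu} = (-Δ)^{-iu/2}`. -/
def impKernel (n : ℕ) (u : ℝ) (x : Rn n) : ℂ :=
  (Real.pi : ℂ) ^ (-(n : ℂ)/2) * (2 : ℂ) ^ (-(Complex.I * u)) *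
    (Complex.Gamma (((n : ℂ) - Complex.I * u)/2) / Complex.Gamma (Complex.I * u/2)) *
    ((‖x‖ : ℂ) ^ (-(n : ℂ) + Complex.I * u))

/-!
Apart from `|x|^{-n}` and `π^{-n/2}`, the only factor of `K_{iu}` of non-unit modulus is the
quotient `Γ((n - iu)/2) / Γ(iu/2)`. Euler's reflection formula gives `|Γ(iy)|² = π / (y sinh πy)`
and `|Γ(1/2 + iy)|² = π / cosh πy`, so the quotient has modulus `1` for `n = 0` and squared
modulus `(u/2) tanh(πu/2) ≤ |u|/2` for `n = 1`. The functional equation `Γ(z + 1) = z Γ(z)` raises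
`n` by two at the cost of the factor `|(n - iu)/2| ≤ (n + |u|)/2`, whence the quotient is at most
`((n + |u|)/2)^{n/2}`.
-/

section GammaRatio

open Complex ComplexConjugate
open scoped Real

theorem Complex.Gamma_I_mul_ne_zero {y : ℝ} (hy : y ≠ 0) : Gamma (I * y) ≠ 0 :=
  Gamma_ne_zero fun m h => hy (by simpa using congrArg im h)

theorem Complex.norm_Gamma_I_mul_sq {y : ℝ} (hy : y ≠ 0) :
    ‖Gamma (I * y)‖ ^ 2 = π / (y * Real.sinh (π * y)) := by
  have hz : -(I * y) ≠ 0 := by simpa using hy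
  have hreflect := Gamma_mul_Gamma_one_sub (I * y)
  rw [show 1 - I * y = -(I * y) + 1 by ring, Gamma_add_one _ hz,
    show -(I * (y : ℂ)) = conj (I * y) by simp, Gamma_conj, ← mul_assoc, mul_comm (Gamma _),
    mul_assoc, mul_conj, show (π : ℂ) * (I * y) = (π * y : ℝ) * I by push_cast; ring,
    sin_mul_I, ← ofReal_sinh] at hreflect
  have hsinh : Real.sinh (π * y) ≠ 0 := by simpa using mul_ne_zero Real.pi_ne_zero hy
  have hs : (Real.sinh (π * y) : ℂ) ≠ 0 := by exact_mod_cast hsinh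
  simp only [map_mul, conj_I, conj_ofReal] at hreflect
  field_simp at hreflect
  simp only [I_sq, neg_mul, one_mul, neg_neg] at hreflect
  rw [← normSq_eq_norm_sq, eq_div_iff (mul_ne_zero hy hsinh), ← ofReal_inj, ofReal_mul,
    ofReal_mul, ← hreflect]
  ring

theorem Complex.norm_Gamma_one_half_add_I_mul_sq (y : ℝ) :
    ‖Gamma (1 / 2 + I * y)‖ ^ 2 = π / Real.cosh (π * y) := by
  have hreflect := Gamma_mul_Gamma_one_sub (1 / 2 + I * y)
  rw [show 1 - (1 / 2 + I * y) = conj (1 / 2 + I * y) by simp [map_ofNat]; ring, Gamma_conj,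
    mul_conj, show (π : ℂ) * (1 / 2 + I * y) = (π * y : ℝ) * I + π / 2 by push_cast; ring,
    sin_add_pi_div_two, cos_mul_I, ← ofReal_cosh, ← ofReal_div] at hreflect
  rw [← normSq_eq_norm_sq]
  exact_mod_cast hreflect

def gammaRatio (n : ℕ) (u : ℝ) : ℂ :=
  Gamma ((n - I * u) / 2) / Gamma (I * u / 2)

lemma I_mul_div_two (u : ℝ) : I * u / 2 = I * ↑(u / 2) := by
  push_cast; ring

lemma norm_gammaRatio_zero {u : ℝ} (hu : u ≠ 0) : ‖gammaRatio 0 u‖ = 1 := by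
  have hconj : ((0 : ℕ) - I * u) / 2 = conj (I * u / 2) := by simp [map_ofNat]
  rw [gammaRatio, hconj, Gamma_conj, norm_div, RCLike.norm_conj, div_self]
  rw [I_mul_div_two, norm_ne_zero_iff]
  exact Gamma_I_mul_ne_zero (div_ne_zero hu two_ne_zero)

lemma norm_gammaRatio_one_sq {u : ℝ} (hu : u ≠ 0) :
    ‖gammaRatio 1 u‖ ^ 2 = u / 2 * Real.tanh (π * (u / 2)) := by
  have hnum : ((1 : ℕ) - I * u) / 2 = 1 / 2 + I * ↑(-(u / 2)) := by push_cast; ring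
  have hu2 : u / 2 ≠ 0 := div_ne_zero hu two_ne_zero
  have hsinh : Real.sinh (π * (u / 2)) ≠ 0 := by simpa using mul_ne_zero Real.pi_ne_zero hu2
  rw [gammaRatio, norm_div, div_pow, hnum, I_mul_div_two, norm_Gamma_one_half_add_I_mul_sq,
    norm_Gamma_I_mul_sq hu2, mul_neg, Real.cosh_neg, Real.tanh_eq_sinh_div_cosh]
  field_simp

lemma norm_gammaRatio_one_le {u : ℝ} (hu : u ≠ 0) :
    ‖gammaRatio 1 u‖ ≤ ((1 + |u|) / 2) ^ ((1 : ℝ) / 2) := by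
  have hsq : ‖gammaRatio 1 u‖ ^ 2 ≤ (1 + |u|) / 2 :=
    calc ‖gammaRatio 1 u‖ ^ 2 = u / 2 * Real.tanh (π * (u / 2)) := norm_gammaRatio_one_sq hu
      _ ≤ |u / 2| * |Real.tanh (π * (u / 2))| := (le_abs_self _).trans (abs_mul _ _).le
      _ ≤ |u / 2| * 1 := by gcongr; exact (Real.abs_tanh_lt_one _).le
      _ ≤ (1 + |u|) / 2 := by rw [abs_div, abs_two]; linarith
  rw [← Real.sqrt_eq_rpow]
  exact Real.le_sqrt_of_sq_le hsq

lemma gammaRatio_add_two (n : ℕ) {u : ℝ} (hu : u ≠ 0) :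
    gammaRatio (n + 2) u = (n - I * u) / 2 * gammaRatio n u := by
  have hz : (n - I * u) / 2 ≠ 0 := by
    simpa [sub_eq_zero] using fun h => hu (by simpa using (congrArg im h).symm)
  rw [gammaRatio, gammaRatio, show ((n + 2 : ℕ) - I * u) / 2 = (n - I * u) / 2 + 1 by
    push_cast; ring, Gamma_add_one _ hz, mul_div_assoc]

lemma norm_gammaRatio_le (n : ℕ) {u : ℝ} (hu : u ≠ 0) :
    ‖gammaRatio n u‖ ≤ ((n + |u|) / 2) ^ ((n : ℝ) / 2) := by
  induction n using Nat.twoStepInduction with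
  | zero => simp [norm_gammaRatio_zero hu]
  | one => simpa using norm_gammaRatio_one_le hu
  | more n ih _ =>
    have hfactor : ‖((n : ℂ) - I * u) / 2‖ ≤ (n + |u|) / 2 := by
      rw [norm_div, RCLike.norm_ofNat]
      gcongr
      simpa using norm_sub_le (n : ℂ) (I * u)
    calc ‖gammaRatio (n + 2) u‖ ≤ (n + |u|) / 2 * ((n + |u|) / 2) ^ ((n : ℝ) / 2) := by
          rw [gammaRatio_add_two n hu, norm_mul]
          gcongr
      _ ≤ ((n + 2 + |u|) / 2) * ((n + 2 + |u|) / 2) ^ ((n : ℝ) / 2) := by gcongr <;> linarith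
      _ = ((↑(n + 2) + |u|) / 2) ^ ((↑(n + 2) : ℝ) / 2) := by
          rw [← Real.rpow_one_add' (by positivity) (by positivity)]
          push_cast
          ring_nf

end GammaRatio

lemma norm_impKernel (n : ℕ) (u : ℝ) {x : Rn n} (hx : x ≠ 0) :
    ‖impKernel n u x‖ = Real.pi ^ (-(n : ℝ) / 2) * ‖gammaRatio n u‖ * ‖x‖ ^ (-(n : ℝ)) := by
  have hpow (r : ℝ) (hr : 0 < r) (z : ℂ) : ‖(r : ℂ) ^ z‖ = r ^ z.re :=
    Complex.norm_cpow_eq_rpow_re_of_pos hr z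
  rw [impKernel, norm_mul, norm_mul, norm_mul, hpow _ Real.pi_pos, ← Complex.ofReal_ofNat,
    hpow _ two_pos, hpow _ (norm_pos_iff.2 hx)]
  simp [gammaRatio]

theorem imaginary_power_kernel_bound_general (n : ℕ) :
    ∃ C : ℝ, 0 < C ∧ ∀ u : ℝ, u ≠ 0 → ∀ x : Rn n, x ≠ 0 →
      ‖impKernel n u x‖ ≤ C * (1 + |u|) ^ ((n : ℝ)/2) * ‖x‖ ^ (-(n : ℝ)) := by
  refine ⟨Real.pi ^ (-(n : ℝ) / 2) * ((n + 1) / 2) ^ ((n : ℝ) / 2), by positivity, ?_⟩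
  intro u hu x hx
  have hbase : (n + |u|) / 2 ≤ (n + 1) / 2 * (1 + |u|) := by
    nlinarith [abs_nonneg u, (Nat.cast_nonneg n : (0 : ℝ) ≤ n)]
  rw [norm_impKernel n u hx]
  calc Real.pi ^ (-(n : ℝ) / 2) * ‖gammaRatio n u‖ * ‖x‖ ^ (-(n : ℝ))
      ≤ Real.pi ^ (-(n : ℝ) / 2) * ((n + 1) / 2 * (1 + |u|)) ^ ((n : ℝ) / 2) *
          ‖x‖ ^ (-(n : ℝ)) := by
        gcongr
        exact (norm_gammaRatio_le n hu).trans (by gcongr)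
    _ = _ := by rw [Real.mul_rpow (by positivity) (by positivity)]; ring

/-- Let `n ≥ 1`. Then there is a constant `C`, depending only on `n`, such that
for all `u ∈ ℝ \ {0}` and all `x ∈ ℝⁿ \ {0}`,
`|K_{iu}(x)| ≤ C (1 + |u|)^{n/2} |x|^{-n}`. -/
theorem imaginary_power_kernel_bound (n : ℕ) (hn : 1 ≤ n) :
    ∃ C : ℝ, 0 < C ∧ ∀ u : ℝ, u ≠ 0 → ∀ x : Rn n, x ≠ 0 →
      ‖impKernel n u x‖ ≤ C * (1 + |u|) ^ ((n : ℝ)/2) * ‖x‖ ^ (-(n : ℝ)) :=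
  imaginary_power_kernel_bound_general n
end
end

section
/- Let n ≥ 2, 1 − n/2 < α < 1, and fix α and n. Then, with A_α(u) = Γ(α + n/2 − 1/2) Γ(−iu/2)/(4π^{1/2}) · [2^{−iu}/Γ(α + n/2 + iu/2) − 1/Γ(α + n/2)], there is a constant C such that |A_α(u)| ≤ C (1 + |u|)^{−α − n/2} for all u ∈ ℝ \ {0}. -/
/-!
Put `σ = α + n/2 > 1` and `s = -iu/2`. Then `A_α(u)` is a constant multiple of
`Γ(s) (h(s) - h(0))` with `h(s) = 2^{2s} / Γ(σ - s)` entire, so near `u = 0` the pole of `Γ` at `0`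
is cancelled. For large `|u|` everything reduces to `|Γ(it) / Γ(σ - it)| ≲ |t|^{-σ}` (the term
`|Γ(it)| / Γ(σ)` is smaller, as `|Γ(σ + it)| ≤ Γ(σ)`). The reflection formula gives
`|Γ(it)|² = π / (t sinh πt)`. For the denominator, Euler's product shows that
`Γ(x)² / |Γ(x + it)|² = ∏_{j ≥ 0} (1 + t²/(x + j)²)` is log-convex in `x`; interpolating between its
explicit values at `x = 1/2` and `x = 3/2` and shifting by integers via `Γ(s + 1) = s Γ(s)` gives
`|Γ(σ + it)|² cosh πt ≳ |t|^{2σ - 1}`.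
-/

open MeasureTheory Metric Filter Topology
open scoped ENNReal NNReal FourierTransform SchwartzMap

noncomputable section

/-- The Mellin coefficient
`A_α(u) = Γ(α+n/2-1/2) Γ(-iu/2)/(4π^{1/2}) · [2^{-iu}/Γ(α+n/2+iu/2) - 1/Γ(α+n/2)]`. -/
def mellinCoef (n : ℕ) (α : ℝ) (u : ℝ) : ℂ :=
  Complex.Gamma ((α + (n : ℝ)/2 - 1/2 : ℝ) : ℂ) * Complex.Gamma (-(Complex.I * u)/2) /
      (4 * (Real.pi : ℂ) ^ (1/2 : ℂ)) *
    ((2 : ℂ) ^ (-(Complex.I * u)) / Complex.Gamma (((α + (n : ℝ)/2 : ℝ) : ℂ) + Complex.I * u/2) -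
      1 / Complex.Gamma (((α + (n : ℝ)/2 : ℝ) : ℂ)))

open Complex Finset
open scoped Real

lemma cosh_le_two_mul_sinh {x : ℝ} (hx : 1 ≤ x) : Real.cosh x ≤ 2 * Real.sinh x := by
  rw [Real.cosh_eq, Real.sinh_eq]
  have h3 : 3 ≤ Real.exp x * Real.exp x := by
    rw [← Real.exp_add]; linarith [Real.add_one_le_exp (x + x)]
  have h1 : Real.exp x * Real.exp (-x) = 1 := by rw [← Real.exp_add, add_neg_cancel, Real.exp_zero]
  nlinarith [Real.exp_pos (-x)]

lemma one_add_rpow_mul_rpow_le {a b θ : ℝ} (ha : 0 ≤ a) (hb : 0 ≤ b) (hθ₀ : 0 ≤ θ)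
    (hθ₁ : θ ≤ 1) : 1 + a ^ (1 - θ) * b ^ θ ≤ (1 + a) ^ (1 - θ) * (1 + b) ^ θ := by
  have hθ₁' : 0 ≤ 1 - θ := by linarith
  have hw : 1 - θ + θ = 1 := by ring
  have ha₁ : 0 < 1 + a := by linarith
  have hb₁ : 0 < 1 + b := by linarith
  -- weighted AM-GM for the pairs `(1/(1+a), 1/(1+b))` and `(a/(1+a), b/(1+b))`, then add
  have h₁ := Real.geom_mean_le_arith_mean2_weighted hθ₁' hθ₀
    (one_div_pos.mpr ha₁).le (one_div_pos.mpr hb₁).le hw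
  have h₂ := Real.geom_mean_le_arith_mean2_weighted hθ₁' hθ₀
    (div_nonneg ha ha₁.le) (div_nonneg hb hb₁.le) hw
  rw [Real.div_rpow zero_le_one ha₁.le, Real.div_rpow zero_le_one hb₁.le, Real.one_rpow,
    Real.one_rpow] at h₁
  rw [Real.div_rpow ha ha₁.le, Real.div_rpow hb hb₁.le] at h₂
  have hsum : (1 - θ) * (1 / (1 + a)) + θ * (1 / (1 + b)) +
      ((1 - θ) * (a / (1 + a)) + θ * (b / (1 + b))) = 1 := by
    field_simp; ring
  have hP : 0 < (1 + a) ^ (1 - θ) * (1 + b) ^ θ := by positivity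
  have := add_le_add h₁ h₂
  rw [hsum, div_mul_div_comm, div_mul_div_comm, one_mul, ← add_div, div_le_one hP] at this
  exact this

lemma one_add_sq_div_sq_le (t : ℝ) {p q θ : ℝ} (hp : 0 < p) (hq : 0 < q) (hθ₀ : 0 ≤ θ)
    (hθ₁ : θ ≤ 1) :
    1 + t ^ 2 / ((1 - θ) * p + θ * q) ^ 2 ≤
      (1 + t ^ 2 / p ^ 2) ^ (1 - θ) * (1 + t ^ 2 / q ^ 2) ^ θ := by
  have amgm : p ^ (1 - θ) * q ^ θ ≤ (1 - θ) * p + θ * q :=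
    Real.geom_mean_le_arith_mean2_weighted (by linarith) hθ₀ hp.le hq.le (by ring)
  have hgeom :
      (t ^ 2 / p ^ 2) ^ (1 - θ) * (t ^ 2 / q ^ 2) ^ θ = t ^ 2 / (p ^ (1 - θ) * q ^ θ) ^ 2 := by
    rw [Real.div_rpow (sq_nonneg t) (sq_nonneg p), Real.div_rpow (sq_nonneg t) (sq_nonneg q),
      div_mul_div_comm, ← Real.rpow_add' (sq_nonneg t) (by norm_num), sub_add_cancel,
      Real.rpow_one, mul_pow, ← Real.rpow_pow_comm hp.le, ← Real.rpow_pow_comm hq.le]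
  calc 1 + t ^ 2 / ((1 - θ) * p + θ * q) ^ 2 ≤ 1 + t ^ 2 / (p ^ (1 - θ) * q ^ θ) ^ 2 := by
        gcongr
    _ = 1 + (t ^ 2 / p ^ 2) ^ (1 - θ) * (t ^ 2 / q ^ 2) ^ θ := by rw [hgeom]
    _ ≤ _ := one_add_rpow_mul_rpow_le (by positivity) (by positivity) hθ₀ hθ₁

lemma rpow_neg_le_mul_rpow_neg {x y k σ : ℝ} (hy : 0 < y) (hk : 0 < k) (hσ : 0 ≤ σ)
    (h : y ≤ k * x) : x ^ (-σ) ≤ k ^ σ * y ^ (-σ) := by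
  calc x ^ (-σ) ≤ (y / k) ^ (-σ) :=
        Real.rpow_le_rpow_of_nonpos (div_pos hy hk) (by rwa [div_le_iff₀' hk]) (by linarith)
    _ = k ^ σ * y ^ (-σ) := by
        rw [Real.div_rpow hy.le hk.le, Real.rpow_neg hk.le, div_inv_eq_mul, mul_comm]

lemma norm_Gamma_one_half_add_mul_I_sq (t : ℝ) :
    ‖Gamma (1 / 2 + t * I)‖ ^ 2 * Real.cosh (π * t) = π := by
  have hconj : 1 - (1 / 2 + t * I) = (starRingEnd ℂ) (1 / 2 + t * I) := by
    norm_num [Complex.ext_iff]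
  have hsin : sin (π * (1 / 2 + t * I)) = Real.cosh (π * t) := by
    rw [show (π : ℂ) * (1 / 2 + t * I) = π / 2 + (π * t : ℝ) * I by push_cast; ring,
      sin_add, sin_pi_div_two, cos_pi_div_two, cos_mul_I, ofReal_cosh]
    ring
  have key := Gamma_mul_Gamma_one_sub (1 / 2 + t * I)
  rw [hconj, Gamma_conj, mul_conj, hsin,
    eq_div_iff (ofReal_ne_zero.mpr (Real.cosh_pos _).ne')] at key
  rw [Complex.sq_norm]
  exact_mod_cast key

lemma norm_Gamma_mul_I_sq {t : ℝ} (ht : t ≠ 0) :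
    ‖Gamma (t * I)‖ ^ 2 * (t * Real.sinh (π * t)) = π := by
  have htI : -(t * I : ℂ) ≠ 0 := neg_ne_zero.mpr (mul_ne_zero (ofReal_ne_zero.mpr ht) I_ne_zero)
  have hshift : Gamma (1 - t * I) = -(t * I) * (starRingEnd ℂ) (Gamma (t * I)) := by
    have hconj : (starRingEnd ℂ) (t * I) = -(t * I) := by simp
    rw [← Gamma_conj, hconj, ← Gamma_add_one _ htI]
    ring_nf
  have hsin : sin (π * (t * I)) = Real.sinh (π * t) * I := by
    rw [show (π : ℂ) * (t * I) = (π * t : ℝ) * I by push_cast; ring, sin_mul_I, ofReal_sinh]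
  have hsinh : (Real.sinh (π * t) : ℂ) * I ≠ 0 :=
    mul_ne_zero (ofReal_ne_zero.mpr (Real.sinh_ne_zero.mpr (mul_ne_zero Real.pi_ne_zero ht)))
      I_ne_zero
  have key := Gamma_mul_Gamma_one_sub (t * I)
  rw [hshift, hsin, eq_div_iff hsinh] at key
  apply ofReal_injective
  rw [ofReal_mul, ofReal_pow, ofReal_mul, ← mul_conj']
  linear_combination key +
    (Gamma (t * I) * (starRingEnd ℂ) (Gamma (t * I)) * t * Real.sinh (π * t)) * I_mul_I

lemma Gamma_add_mul_I_ne_zero {x : ℝ} (hx : 0 < x) (t : ℝ) : Gamma (x + t * I) ≠ 0 :=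
  Gamma_ne_zero_of_re_pos (by simpa using hx)

lemma abs_pow_mul_norm_Gamma_le {x : ℝ} (hx : 0 < x) (t : ℝ) (m : ℕ) :
    |t| ^ m * ‖Gamma (x + t * I)‖ ≤ ‖Gamma ((x + m : ℝ) + t * I)‖ := by
  induction m with
  | zero => simp
  | succ k ih =>
    have hne : ((x + k : ℝ) + t * I : ℂ) ≠ 0 := fun h =>
      (by positivity : 0 < x + k).ne' (by simpa using congrArg re h)
    have hstep : Gamma ((x + (k + 1 : ℕ) : ℝ) + t * I) =
        ((x + k : ℝ) + t * I) * Gamma ((x + k : ℝ) + t * I) := by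
      rw [← Gamma_add_one _ hne]; push_cast; ring_nf
    rw [hstep, norm_mul, pow_succ', mul_assoc]
    refine mul_le_mul ?_ ih (by positivity) (norm_nonneg _)
    simpa using abs_im_le_norm ((x + k : ℝ) + t * I : ℂ)

lemma norm_GammaSeq_sq_mul_prod {x : ℝ} (hx : 0 < x) (t : ℝ) {n : ℕ} (hn : n ≠ 0) :
    ‖GammaSeq (x + t * I) n‖ ^ 2 * ∏ j ∈ range (n + 1), (1 + t ^ 2 / (x + j) ^ 2) =
      Real.GammaSeq x n ^ 2 := by
  obtain ⟨P, hPdef⟩ : ∃ P, P = ∏ j ∈ range (n + 1), ‖(x + t * I : ℂ) + j‖ := ⟨_, rfl⟩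
  obtain ⟨R, hRdef⟩ : ∃ R, R = ∏ j ∈ range (n + 1), (x + j : ℝ) := ⟨_, rfl⟩
  have hR : R ≠ 0 := hRdef ▸ prod_ne_zero_iff.mpr fun j _ => by positivity
  have hP : P ≠ 0 := hPdef ▸ prod_ne_zero_iff.mpr fun j _ => norm_ne_zero_iff.mpr fun h =>
    (by positivity : 0 < x + j).ne' (by simpa using congrArg re h)
  have hprod : ∏ j ∈ range (n + 1), (1 + t ^ 2 / (x + j) ^ 2) = P ^ 2 / R ^ 2 := by
    rw [hPdef, hRdef, ← prod_pow, ← prod_pow, ← prod_div_distrib]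
    refine prod_congr rfl fun j _ => ?_
    rw [show (x + t * I : ℂ) + j = (x + j : ℝ) + t * I by push_cast; ring, Complex.sq_norm,
      normSq_add_mul_I]
    field_simp
  have hpow : ‖(n : ℂ) ^ (x + t * I : ℂ)‖ = (n : ℝ) ^ x := by
    rw [← ofReal_natCast, norm_cpow_eq_rpow_re_of_pos (by positivity)]
    simp
  rw [GammaSeq, Real.GammaSeq, norm_div, norm_mul, hpow, Complex.norm_natCast, norm_prod, ← hPdef,
    ← hRdef, hprod]
  field_simp

/-- By Euler's product for `Γ`, `gammaSqRatio t x = ∏_{j ≥ 0} (1 + t² / (x + j)²)`. -/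
def gammaSqRatio (t x : ℝ) : ℝ := Real.Gamma x ^ 2 / ‖Gamma (x + t * I)‖ ^ 2

lemma tendsto_prod_gammaSqRatio {x : ℝ} (hx : 0 < x) (t : ℝ) :
    Tendsto (fun n : ℕ => ∏ j ∈ range (n + 1), (1 + t ^ 2 / (x + j) ^ 2)) atTop
      (𝓝 (gammaSqRatio t x)) := by
  have hΓ : ‖Gamma (x + t * I)‖ ^ 2 ≠ 0 := by
    have := Gamma_add_mul_I_ne_zero hx t
    positivity
  refine (((Real.GammaSeq_tendsto_Gamma x).pow 2).div
    ((GammaSeq_tendsto_Gamma _).norm.pow 2) hΓ).congr' ?_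
  filter_upwards [eventually_ne_atTop 0] with n hn
  have hseq : 0 < Real.GammaSeq x n := by
    unfold Real.GammaSeq
    have : 0 < ∏ j ∈ range (n + 1), (x + j : ℝ) := prod_pos fun j _ => by positivity
    positivity
  have hne : ‖GammaSeq (x + t * I) n‖ ^ 2 ≠ 0 := by
    intro h
    have := norm_GammaSeq_sq_mul_prod hx t hn
    rw [h, zero_mul] at this
    exact hseq.ne' (pow_eq_zero_iff two_ne_zero |>.mp this.symm)
  rw [Pi.div_apply, ← norm_GammaSeq_sq_mul_prod hx t hn, mul_div_cancel_left₀ _ hne]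

lemma one_le_gammaSqRatio {x : ℝ} (hx : 0 < x) (t : ℝ) : 1 ≤ gammaSqRatio t x :=
  ge_of_tendsto' (tendsto_prod_gammaSqRatio hx t) fun n =>
    Finset.one_le_prod fun j _ => le_add_of_nonneg_right (by positivity)

lemma norm_Gamma_add_mul_I_le {x : ℝ} (hx : 0 < x) (t : ℝ) :
    ‖Gamma (x + t * I)‖ ≤ Real.Gamma x := by
  have h := one_le_gammaSqRatio hx t
  rw [gammaSqRatio, one_le_div (by have := Gamma_add_mul_I_ne_zero hx t; positivity)] at h
  exact (pow_le_pow_iff_left₀ (norm_nonneg _) (Real.Gamma_pos_of_pos hx).le two_ne_zero).mp h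

lemma gammaSqRatio_le_rpow_mul_rpow (t : ℝ) {p q θ : ℝ} (hp : 0 < p) (hq : 0 < q)
    (hθ₀ : 0 ≤ θ) (hθ₁ : θ ≤ 1) :
    gammaSqRatio t ((1 - θ) * p + θ * q) ≤ gammaSqRatio t p ^ (1 - θ) * gammaSqRatio t q ^ θ := by
  have hx : 0 < (1 - θ) * p + θ * q := by
    rcases hθ₀.eq_or_lt with rfl | hθ
    · simpa using hp
    · nlinarith
  refine le_of_tendsto_of_tendsto (tendsto_prod_gammaSqRatio hx t)
    (((tendsto_prod_gammaSqRatio hp t).rpow_const (Or.inr (by linarith))).mul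
      ((tendsto_prod_gammaSqRatio hq t).rpow_const (Or.inr hθ₀))) (Eventually.of_forall fun n => ?_)
  dsimp only
  rw [← Real.finsetProd_rpow _ _ fun j _ => by positivity,
    ← Real.finsetProd_rpow _ _ fun j _ => by positivity, ← prod_mul_distrib]
  refine prod_le_prod (fun j _ => by positivity) fun j _ => ?_
  have := one_add_sq_div_sq_le t (p := p + j) (q := q + j) (by positivity) (by positivity) hθ₀ hθ₁
  rwa [show (1 - θ) * p + θ * q + j = (1 - θ) * (p + j) + θ * (q + j) by ring]

lemma gammaSqRatio_one_half (t : ℝ) : gammaSqRatio t (1 / 2) = Real.cosh (π * t) := by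
  have h := norm_Gamma_one_half_add_mul_I_sq t
  have hΓ : ‖Gamma (1 / 2 + t * I)‖ ^ 2 ≠ 0 := by
    have := Gamma_add_mul_I_ne_zero (x := 1 / 2) (by norm_num) t
    push_cast at this
    positivity
  rw [gammaSqRatio, Real.Gamma_one_half_eq, Real.sq_sqrt Real.pi_pos.le]
  push_cast
  rw [div_eq_iff hΓ, mul_comm]
  exact h.symm

lemma gammaSqRatio_three_halves (t : ℝ) :
    gammaSqRatio t (3 / 2) = Real.cosh (π * t) / (1 + 4 * t ^ 2) := by
  have hne : (1 / 2 + t * I : ℂ) ≠ 0 := fun h => by simpa using congrArg re h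
  have hΓ : Gamma (3 / 2 + t * I) = (1 / 2 + t * I) * Gamma (1 / 2 + t * I) := by
    rw [← Gamma_add_one _ hne]; congr 1; ring
  have hnorm : ‖(1 / 2 + t * I : ℂ)‖ ^ 2 = (1 + 4 * t ^ 2) / 4 := by
    rw [show (1 / 2 + t * I : ℂ) = (1 / 2 : ℝ) + t * I by push_cast; ring, Complex.sq_norm,
      normSq_add_mul_I]
    ring
  have hΓ3 : Real.Gamma (3 / 2) = Real.Gamma (1 / 2) / 2 := by
    rw [show (3 / 2 : ℝ) = 1 / 2 + 1 by norm_num, Real.Gamma_add_one (by norm_num)]; ring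
  have h := gammaSqRatio_one_half t
  rw [gammaSqRatio] at h ⊢
  push_cast at h ⊢
  rw [hΓ, hΓ3, norm_mul, mul_pow, hnorm, ← h]
  have : ‖Gamma (1 / 2 + t * I)‖ ≠ 0 := by
    have := Gamma_add_mul_I_ne_zero (x := 1 / 2) (by norm_num) t
    push_cast at this
    positivity
  field_simp
  ring

lemma Gamma_sq_mul_rpow_le_norm_Gamma_sq_mul_cosh (t : ℝ) {θ : ℝ} (hθ₀ : 0 ≤ θ) (hθ₁ : θ ≤ 1) :
    Real.Gamma (1 / 2 + θ) ^ 2 * (1 + 4 * t ^ 2) ^ θ ≤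
      ‖Gamma ((1 / 2 + θ : ℝ) + t * I)‖ ^ 2 * Real.cosh (π * t) := by
  have h := gammaSqRatio_le_rpow_mul_rpow t (p := 1 / 2) (q := 3 / 2) (by norm_num) (by norm_num)
    hθ₀ hθ₁
  have hc := Real.cosh_pos (π * t)
  have h4 : 0 < 1 + 4 * t ^ 2 := by positivity
  have hrhs : Real.cosh (π * t) ^ (1 - θ) * (Real.cosh (π * t) / (1 + 4 * t ^ 2)) ^ θ =
      Real.cosh (π * t) / (1 + 4 * t ^ 2) ^ θ := by
    rw [Real.div_rpow hc.le h4.le, ← mul_div_assoc, ← Real.rpow_add hc, sub_add_cancel,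
      Real.rpow_one]
  have hΓ := Gamma_add_mul_I_ne_zero (x := 1 / 2 + θ) (by linarith) t
  rw [gammaSqRatio_one_half, gammaSqRatio_three_halves, hrhs,
    show (1 - θ) * (1 / 2) + θ * (3 / 2) = 1 / 2 + θ by ring, gammaSqRatio,
    div_le_div_iff₀ (by positivity) (by positivity)] at h
  linarith

lemma exists_rpow_le_norm_Gamma_sq_mul_cosh {σ : ℝ} (hσ : 1 / 2 ≤ σ) :
    ∃ c > 0, ∀ t : ℝ, c * |t| ^ (2 * σ - 1) ≤ ‖Gamma (σ + t * I)‖ ^ 2 * Real.cosh (π * t) := by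
  obtain ⟨m, θ, rfl, hθ₀, hθ₁⟩ : ∃ (m : ℕ) (θ : ℝ), σ = 1 / 2 + θ + m ∧ 0 ≤ θ ∧ θ ≤ 1 :=
    ⟨⌊σ - 1 / 2⌋₊, σ - 1 / 2 - ⌊σ - 1 / 2⌋₊, by ring,
      by linarith [Nat.floor_le (by linarith : 0 ≤ σ - 1 / 2)],
      by linarith [Nat.lt_floor_add_one (σ - 1 / 2)]⟩
  have hΓ := Real.Gamma_pos_of_pos (by linarith : 0 < 1 / 2 + θ)
  refine ⟨Real.Gamma (1 / 2 + θ) ^ 2, by positivity, fun t => ?_⟩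
  have hpow : |t| ^ (2 * (1 / 2 + θ + m) - 1) = (|t| ^ m) ^ 2 * (t ^ 2) ^ θ := by
    rw [show 2 * (1 / 2 + θ + m) - 1 = ((2 * m : ℕ) : ℝ) + 2 * θ by push_cast; ring,
      Real.rpow_add_of_nonneg (abs_nonneg t) (by positivity) (by positivity), Real.rpow_natCast,
      Real.rpow_mul (abs_nonneg t), pow_mul', Real.rpow_two, sq_abs]
  have hshift := abs_pow_mul_norm_Gamma_le (x := 1 / 2 + θ) (by linarith) t m
  have hinterp := Gamma_sq_mul_rpow_le_norm_Gamma_sq_mul_cosh t hθ₀ hθ₁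
  calc Real.Gamma (1 / 2 + θ) ^ 2 * |t| ^ (2 * (1 / 2 + θ + m) - 1)
      ≤ (|t| ^ m) ^ 2 * (Real.Gamma (1 / 2 + θ) ^ 2 * (1 + 4 * t ^ 2) ^ θ) := by
        rw [hpow, mul_left_comm]
        gcongr
        linarith [sq_nonneg t]
    _ ≤ (|t| ^ m) ^ 2 * (‖Gamma ((1 / 2 + θ : ℝ) + t * I)‖ ^ 2 * Real.cosh (π * t)) := by
        gcongr
    _ = (|t| ^ m * ‖Gamma ((1 / 2 + θ : ℝ) + t * I)‖) ^ 2 * Real.cosh (π * t) := by ring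
    _ ≤ ‖Gamma ((1 / 2 + θ + m : ℝ) + t * I)‖ ^ 2 * Real.cosh (π * t) := by gcongr

lemma exists_norm_Gamma_mul_I_le {σ : ℝ} (hσ : 1 / 2 ≤ σ) :
    ∃ C > 0, ∀ t : ℝ, 1 / 2 ≤ |t| → ‖Gamma (t * I)‖ ≤ C * |t| ^ (-σ) * ‖Gamma (σ - t * I)‖ := by
  obtain ⟨c, hc, hlower⟩ := exists_rpow_le_norm_Gamma_sq_mul_cosh hσ
  refine ⟨Real.sqrt (2 * π / c), by positivity, fun t ht => ?_⟩
  have hT : 0 < |t| := by linarith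
  have hsinh : Real.cosh (π * t) ≤ 2 * Real.sinh (π * |t|) := by
    rw [← Real.cosh_abs, abs_mul, abs_of_pos Real.pi_pos]
    exact cosh_le_two_mul_sinh (by nlinarith [Real.two_le_pi])
  have hΓt : ‖Gamma (t * I)‖ ^ 2 * (|t| * Real.sinh (π * |t|)) = π := by
    convert norm_Gamma_mul_I_sq (abs_pos.mp hT) using 2
    rcases le_or_gt 0 t with h | h
    · rw [abs_of_nonneg h]
    · rw [abs_of_neg h, mul_neg, Real.sinh_neg, neg_mul_neg]
  have hΓσ : c * |t| ^ (2 * σ - 1) ≤ ‖Gamma (σ - t * I)‖ ^ 2 * (2 * Real.sinh (π * |t|)) := by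
    have := hlower (-t)
    rw [abs_neg, mul_neg, Real.cosh_neg, ofReal_neg, neg_mul, ← sub_eq_add_neg] at this
    exact this.trans (by gcongr)
  have hT1 : |t| ^ (2 * σ - 1) * |t| * (|t| ^ (-σ)) ^ 2 = 1 := by
    rw [sq, ← Real.rpow_add_one hT.ne', ← Real.rpow_add hT, ← Real.rpow_add hT]
    convert Real.rpow_zero |t| using 2
    ring
  have hsq : ‖Gamma (t * I)‖ ^ 2 ≤ (2 * π / c) * (|t| ^ (-σ)) ^ 2 * ‖Gamma (σ - t * I)‖ ^ 2 :=
    calc ‖Gamma (t * I)‖ ^ 2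
        = ‖Gamma (t * I)‖ ^ 2 * (c * |t| ^ (2 * σ - 1)) * (|t| * (|t| ^ (-σ)) ^ 2) / c := by
          rw [eq_div_iff hc.ne']
          linear_combination (-(‖Gamma (t * I)‖ ^ 2 * c)) * hT1
      _ ≤ ‖Gamma (t * I)‖ ^ 2 * (‖Gamma (σ - t * I)‖ ^ 2 * (2 * Real.sinh (π * |t|))) *
            (|t| * (|t| ^ (-σ)) ^ 2) / c := by gcongr
      _ = (2 * π / c) * (|t| ^ (-σ)) ^ 2 * ‖Gamma (σ - t * I)‖ ^ 2 := by
          linear_combination (2 * (|t| ^ (-σ)) ^ 2 * ‖Gamma (σ - t * I)‖ ^ 2 / c) * hΓt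
  refine (pow_le_pow_iff_left₀ (norm_nonneg _) (by positivity) two_ne_zero).mp ?_
  rw [mul_pow, mul_pow, Real.sq_sqrt (by positivity)]
  exact hsq

lemma exists_norm_Gamma_mul_sub_le_of_norm_le {h : ℂ → ℂ} (hh : Differentiable ℂ h) {r : ℝ}
    (hr : r < 1) : ∃ M, ∀ s : ℂ, ‖s‖ ≤ r → ‖Gamma s * (h s - h 0)‖ ≤ M := by
  -- `Γ(s) (h s - h 0) = Γ(s + 1) · dslope h 0 s` is continuous on the closed disc
  have hcont : ContinuousOn (fun s => Gamma (s + 1) * dslope h 0 s) (closedBall 0 r) := by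
    refine ContinuousOn.mul (fun s hs => ?_) ?_
    · refine (differentiableAt_Gamma _ fun m hm => ?_).continuousAt.comp_continuousWithinAt
        (continuous_add_const 1).continuousWithinAt
      have hre := congrArg re hm
      have hs' := neg_le_of_abs_le ((abs_re_le_norm s).trans (mem_closedBall_zero_iff.mp hs))
      simp only [add_re, one_re, neg_re, natCast_re] at hre
      linarith [m.cast_nonneg (α := ℝ)]
    · exact ((differentiableOn_dslope univ_mem).mpr hh.differentiableOn).continuousOn.mono
        (Set.subset_univ _)
  obtain ⟨M, hM⟩ := (isCompact_closedBall 0 r).exists_bound_of_continuousOn hcont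
  refine ⟨max M 0, fun s hs => ?_⟩
  rcases eq_or_ne s 0 with rfl | hs0
  · simp
  rw [← sub_smul_dslope h 0 s, sub_zero, smul_eq_mul, ← mul_assoc, mul_comm _ s,
    ← Gamma_add_one _ hs0]
  exact (hM s (mem_closedBall_zero_iff.mpr hs)).trans (le_max_left _ _)

def twoPowDivGamma (σ : ℝ) (s : ℂ) : ℂ := 2 ^ (2 * s) / Gamma (σ - s)

lemma differentiable_twoPowDivGamma (σ : ℝ) : Differentiable ℂ (twoPowDivGamma σ) := by
  have h₁ : Differentiable ℂ fun s : ℂ => (2 : ℂ) ^ (2 * s) :=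
    (differentiable_id.const_mul 2).const_cpow (Or.inl two_ne_zero)
  have h₂ :=
    differentiable_one_div_Gamma.comp ((differentiable_const (σ : ℂ)).sub differentiable_id)
  show Differentiable ℂ fun s => 2 ^ (2 * s) / Gamma (σ - s)
  simp_rw [div_eq_mul_inv]
  exact h₁.mul h₂

lemma exists_norm_Gamma_mul_I_mul_sub_le {σ : ℝ} (hσ : 1 / 2 ≤ σ) :
    ∃ C ≥ 0, ∀ t : ℝ, 1 / 2 ≤ |t| →
      ‖Gamma (t * I) * (twoPowDivGamma σ (t * I) - twoPowDivGamma σ 0)‖ ≤ C * |t| ^ (-σ) := by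
  obtain ⟨C, hC, hratio⟩ := exists_norm_Gamma_mul_I_le hσ
  refine ⟨2 * C, by positivity, fun t ht => ?_⟩
  have hσ₀ : 0 < σ := by linarith
  have harg : (σ : ℂ) + (-t : ℝ) * I = σ - t * I := by push_cast; ring
  have hΓ : 0 < ‖Gamma (σ - t * I)‖ :=
    norm_pos_iff.mpr (harg ▸ Gamma_add_mul_I_ne_zero hσ₀ (-t))
  have hΓσ : ‖Gamma (σ - t * I)‖ ≤ Real.Gamma σ := harg ▸ norm_Gamma_add_mul_I_le hσ₀ (-t)
  have hpow : ‖(2 : ℂ) ^ (2 * (t * I))‖ = 1 := by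
    rw [← ofReal_ofNat, norm_cpow_eq_rpow_re_of_pos two_pos]
    simp
  have hbracket : ‖twoPowDivGamma σ (t * I) - twoPowDivGamma σ 0‖ ≤ 2 / ‖Gamma (σ - t * I)‖ := by
    refine (norm_sub_le _ _).trans ?_
    rw [twoPowDivGamma, twoPowDivGamma, norm_div, norm_div, hpow, mul_zero, Complex.cpow_zero,
      sub_zero, norm_one, Gamma_ofReal, norm_real,
      Real.norm_of_nonneg (Real.Gamma_pos_of_pos hσ₀).le]
    calc 1 / ‖Gamma (σ - t * I)‖ + 1 / Real.Gamma σ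
        ≤ 1 / ‖Gamma (σ - t * I)‖ + 1 / ‖Gamma (σ - t * I)‖ := by gcongr
      _ = 2 / ‖Gamma (σ - t * I)‖ := by ring
  calc ‖Gamma (t * I) * (twoPowDivGamma σ (t * I) - twoPowDivGamma σ 0)‖
      ≤ C * |t| ^ (-σ) * ‖Gamma (σ - t * I)‖ * (2 / ‖Gamma (σ - t * I)‖) := by
        rw [norm_mul]; gcongr; exact hratio t ht
    _ = 2 * C * |t| ^ (-σ) := by field_simp

lemma exists_norm_Gamma_mul_I_mul_sub_le_one_add_rpow {σ : ℝ} (hσ : 1 / 2 ≤ σ) :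
    ∃ C ≥ 0, ∀ t : ℝ,
      ‖Gamma (t * I) * (twoPowDivGamma σ (t * I) - twoPowDivGamma σ 0)‖ ≤ C * (1 + |t|) ^ (-σ) := by
  obtain ⟨M, hM⟩ := exists_norm_Gamma_mul_sub_le_of_norm_le (differentiable_twoPowDivGamma σ)
    (r := 1 / 2) (by norm_num)
  obtain ⟨C, hC, hdecay⟩ := exists_norm_Gamma_mul_I_mul_sub_le hσ
  have hσ₀ : 0 ≤ σ := by linarith
  refine ⟨max M 0 * (3 / 2) ^ σ + C * 3 ^ σ, by positivity, fun t => ?_⟩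
  have hP : 0 ≤ (1 + |t|) ^ (-σ) := by positivity
  rcases le_total |t| (1 / 2) with ht | ht
  · have hsmall : ‖Gamma (t * I) * (twoPowDivGamma σ (t * I) - twoPowDivGamma σ 0)‖ ≤ M :=
      hM _ (by simpa using ht)
    have h1 : (1 : ℝ) ≤ (3 / 2) ^ σ * (1 + |t|) ^ (-σ) := by
      simpa using rpow_neg_le_mul_rpow_neg (x := 1) (by positivity) (by norm_num) hσ₀
        (by linarith)
    nlinarith [le_max_left M 0, le_max_right M 0, mul_nonneg hC (by positivity : (0:ℝ) ≤ 3 ^ σ)]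
  · have h1 : |t| ^ (-σ) ≤ 3 ^ σ * (1 + |t|) ^ (-σ) :=
      rpow_neg_le_mul_rpow_neg (by positivity) (by norm_num) hσ₀ (by linarith)
    have := hdecay t ht
    nlinarith [le_max_right M 0, mul_nonneg (le_max_right M 0) (by positivity : 0 ≤ (3 / 2 : ℝ) ^ σ)]

theorem mellin_coef_decay_general
    (n : ℕ) (α : ℝ) (hα : 1 - (n : ℝ)/2 < α ∧ α < 1) :
    ∃ C : ℝ, 0 < C ∧ ∀ u : ℝ, u ≠ 0 →
      ‖mellinCoef n α u‖ ≤ C * (1 + |u|) ^ (-α - (n : ℝ)/2) := by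
  set σ : ℝ := α + n / 2 with hσ_def
  have hσ : 1 / 2 ≤ σ := by linarith [hα.1]
  obtain ⟨C, hC, hbound⟩ := exists_norm_Gamma_mul_I_mul_sub_le_one_add_rpow hσ
  set K := ‖Gamma (α + n / 2 - 1 / 2 : ℝ) / (4 * (π : ℂ) ^ (1 / 2 : ℂ))‖
  refine ⟨K * C * 2 ^ σ + 1, by positivity, fun u _ => ?_⟩
  have hA : mellinCoef n α u = Gamma (α + n / 2 - 1 / 2 : ℝ) / (4 * (π : ℂ) ^ (1 / 2 : ℂ)) *
      (Gamma ((-u / 2 : ℝ) * I) *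
        (twoPowDivGamma σ ((-u / 2 : ℝ) * I) - twoPowDivGamma σ 0)) := by
    simp only [mellinCoef, twoPowDivGamma, hσ_def, mul_zero, cpow_zero, sub_zero]
    push_cast
    ring_nf
  have h2 : (1 + |-u / 2|) ^ (-σ) ≤ 2 ^ σ * (1 + |u|) ^ (-σ) :=
    rpow_neg_le_mul_rpow_neg (by positivity) two_pos (by linarith)
      (by rw [abs_div, abs_neg]; norm_num; linarith [abs_nonneg u])
  rw [show -α - (n : ℝ) / 2 = -σ by ring, hA, norm_mul]
  calc K * ‖_‖ ≤ K * (C * (2 ^ σ * (1 + |u|) ^ (-σ))) := by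
        gcongr
        exact (hbound _).trans (by gcongr)
    _ ≤ (K * C * 2 ^ σ + 1) * (1 + |u|) ^ (-σ) := by
        have : 0 ≤ (1 + |u|) ^ (-σ) := by positivity
        nlinarith

/-- Let `n ≥ 2` and `1 - n/2 < α < 1`. Then there is a constant `C` such that
`|A_α(u)| ≤ C (1 + |u|)^{-α-n/2}` for all `u ∈ ℝ \ {0}`. -/
theorem mellin_coef_decay
    (n : ℕ) (hn : 2 ≤ n) (α : ℝ) (hα : 1 - (n : ℝ)/2 < α ∧ α < 1) :
    ∃ C : ℝ, 0 < C ∧ ∀ u : ℝ, u ≠ 0 →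
      ‖mellinCoef n α u‖ ≤ C * (1 + |u|) ^ (-α - (n : ℝ)/2) :=
  mellin_coef_decay_general n α hα
end
end

section
/- Let n ≥ 2, let 1 − n/2 < α < 1, and let p ∈ P^log(ℝ^n) be a variable exponent with n/(n−1+α) < p⁻ ≤ p⁺ < n/(1−α). Then there exist θ with 0 < θ < 1 − 2/n + 2α/n and a variable exponent p̃ ∈ P^log(ℝ^n) with 0 < inf_x 1/p̃(x) ≤ sup_x 1/p̃(x) < 1, such that 1/p(x) = (1−θ)/2 + θ/p̃(x) for all x ∈ ℝ^n. -/
/-! The local log-Hölder bound makes `1/p` uniformly continuous, so the essential bounds on `p`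
hold at every point and `1/p` takes values in a compact subinterval of
`((1-α)/n, (n-1+α)/n)`. The affine change `1/p̃ = (1/p - (1-θ)/2)/θ` preserves log-Hölder
continuity, and `θ < 1 - 2(1-α)/n` can be taken so close to this bound that `1/p̃` stays in a
compact subinterval of `(0,1)`. -/

open MeasureTheory Metric Filter Topology
open scoped ENNReal NNReal FourierTransform SchwartzMap

noncomputable section

def IsLogHolder {E : Type*} [NormedAddCommGroup E] (u : E → ℝ) : Prop :=
  (∃ c₁ : ℝ, 0 < c₁ ∧ ∀ x y : E, dist x y < 1/2 →
      |u x - u y| ≤ c₁ / Real.log (Real.exp 1 + (dist x y)⁻¹)) ∧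
    (∃ uinf c₂ : ℝ, 0 < c₂ ∧ ∀ x : E, |u x - uinf| ≤ c₂ / Real.log (Real.exp 1 + ‖x‖))

lemma tendsto_logHolderModulus (c : ℝ) :
    Tendsto (fun d : ℝ => c / Real.log (Real.exp 1 + d⁻¹)) (𝓝[>] 0) (𝓝 0) :=
  tendsto_const_nhds.div_atTop <| Real.tendsto_log_atTop.comp <|
    tendsto_atTop_add_const_left _ _ tendsto_inv_nhdsGT_zero

namespace IsLogHolder

variable {E : Type*} [NormedAddCommGroup E] {u : E → ℝ}

theorem uniformContinuous (hu : IsLogHolder u) : UniformContinuous u := by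
  obtain ⟨⟨c₁, -, hc₁⟩, -⟩ := hu
  refine Metric.uniformContinuous_iff.2 fun ε hε => ?_
  obtain ⟨δ, hδ, hδε⟩ := mem_nhdsGT_iff_exists_Ioo_subset.1
    ((tendsto_logHolderModulus c₁).eventually (gt_mem_nhds hε))
  refine ⟨min δ (1/2), lt_min hδ (by norm_num), fun x y hxy => ?_⟩
  -- at `x = y` the modulus is `c₁ / log (exp 1)` since `0⁻¹ = 0`, so this case is separate
  rcases eq_or_ne x y with rfl | hne
  · simpa using hε
  · rw [Real.dist_eq]
    exact (hc₁ x y (hxy.trans_le (min_le_right _ _))).trans_lt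
      (hδε ⟨dist_pos.2 hne, hxy.trans_le (min_le_left _ _)⟩)

theorem comp_lipschitzWith (hu : IsLogHolder u) {g : ℝ → ℝ} {K : ℝ≥0}
    (hg : LipschitzWith K g) (hK : 0 < K) : IsLogHolder (g ∘ u) := by
  obtain ⟨⟨c₁, hc₁, hloc⟩, ⟨uinf, c₂, hc₂, hdec⟩⟩ := hu
  have hcomp : ∀ a b c L : ℝ, |a - b| ≤ c / L → |g a - g b| ≤ K * c / L := fun a b c L h => by
    rw [mul_div_assoc]
    exact (hg.dist_le_mul a b).trans (mul_le_mul_of_nonneg_left h K.2)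
  exact ⟨⟨K * c₁, by positivity, fun x y hxy => hcomp _ _ _ _ (hloc x y hxy)⟩,
    ⟨g uinf, K * c₂, by positivity, fun x => hcomp _ _ _ _ (hdec x)⟩⟩

end IsLogHolder

theorem Continuous.le_of_ae_le {X β : Type*} [TopologicalSpace X] [MeasurableSpace X]
    {μ : Measure X} [μ.IsOpenPosMeasure] [TopologicalSpace β] [Preorder β]
    [OrderClosedTopology β] {f g : X → β} (hf : Continuous f) (hg : Continuous g)
    (h : f ≤ᵐ[μ] g) : f ≤ g := by
  intro x
  have hdense := (Measure.dense_of_ae h).closure_eq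
  rw [(isClosed_le hf hg).closure_eq] at hdense
  exact (hdense ▸ Set.mem_univ x : x ∈ {x | f x ≤ g x})

theorem memPLog_iff {n : ℕ} {p : Rn n → ℝ≥0∞} :
    MemPLog p ↔ Measurable p ∧ (∀ x, 1 ≤ p x) ∧ IsLogHolder (fun x => ((p x)⁻¹).toReal) :=
  Iff.rfl

namespace MemPLog

variable {n : ℕ} {p : Rn n → ℝ≥0∞}

theorem inv_ne_top (hp : MemPLog p) (x : Rn n) : (p x)⁻¹ ≠ ∞ :=
  ENNReal.inv_ne_top.2 (zero_lt_one.trans_le (hp.2.1 x)).ne'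

theorem ofReal_toReal_inv (hp : MemPLog p) (x : Rn n) :
    ENNReal.ofReal ((p x)⁻¹).toReal = (p x)⁻¹ :=
  ENNReal.ofReal_toReal (hp.inv_ne_top x)

theorem continuous (hp : MemPLog p) : Continuous p := by
  have hu := (memPLog_iff.1 hp).2.2.uniformContinuous.continuous
  have hp_eq : p = fun x => (ENNReal.ofReal ((p x)⁻¹).toReal)⁻¹ :=
    funext fun x => by rw [hp.ofReal_toReal_inv, inv_inv]
  rw [hp_eq]
  exact (ENNReal.continuous_ofReal.comp hu).inv

theorem essInf_le (hp : MemPLog p) (x : Rn n) : essInf p volume ≤ p x :=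
  continuous_const.le_of_ae_le hp.continuous ae_essInf_le x

theorem le_essSup (hp : MemPLog p) (x : Rn n) : p x ≤ essSup p volume :=
  hp.continuous.le_of_ae_le continuous_const ae_le_essSup x

theorem exists_inv_bounds (hp : MemPLog p) {A B : ℝ} (hA : 0 < A)
    (hlow : ENNReal.ofReal A < essInf p volume) (hhigh : essSup p volume < ENNReal.ofReal B) :
    ∃ a b : ℝ, B⁻¹ < a ∧ b < A⁻¹ ∧ ∀ x, a ≤ ((p x)⁻¹).toReal ∧ ((p x)⁻¹).toReal ≤ b := by
  have hsup_pos : 0 < essSup p volume := zero_lt_one.trans_le ((hp.2.1 0).trans (hp.le_essSup 0))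
  have hB : 0 < B := ENNReal.ofReal_pos.1 (hsup_pos.trans hhigh)
  have hinf_ne_top : (essInf p volume)⁻¹ ≠ ∞ := ENNReal.inv_ne_top.2 (pos_of_gt hlow).ne'
  refine ⟨((essSup p volume)⁻¹).toReal, ((essInf p volume)⁻¹).toReal, ?_, ?_, fun x => ⟨?_, ?_⟩⟩
  · refine (ENNReal.ofReal_lt_iff_lt_toReal (inv_nonneg.2 hB.le)
      (ENNReal.inv_ne_top.2 hsup_pos.ne')).1 ?_
    rw [ENNReal.ofReal_inv_of_pos hB]
    exact ENNReal.inv_lt_inv.2 hhigh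
  · refine ENNReal.toReal_lt_of_lt_ofReal ?_
    rw [ENNReal.ofReal_inv_of_pos hA]
    exact ENNReal.inv_lt_inv.2 hlow
  · exact ENNReal.toReal_mono (hp.inv_ne_top x) (ENNReal.inv_le_inv.2 (hp.le_essSup x))
  · exact ENNReal.toReal_mono hinf_ne_top (ENNReal.inv_le_inv.2 (hp.essInf_le x))

end MemPLog

theorem memPLog_inv_ofReal {n : ℕ} {u : Rn n → ℝ} (hm : Measurable u) (h0 : ∀ x, 0 ≤ u x)
    (h1 : ∀ x, u x ≤ 1) (hu : IsLogHolder u) : MemPLog (fun x => (ENNReal.ofReal (u x))⁻¹) := by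
  have hu_eq : (fun x => ((ENNReal.ofReal (u x))⁻¹⁻¹).toReal) = u :=
    funext fun x => by rw [inv_inv, ENNReal.toReal_ofReal (h0 x)]
  refine memPLog_iff.2 ⟨hm.ennreal_ofReal.inv,
    fun x => ENNReal.one_le_inv.2 (ENNReal.ofReal_le_one.2 (h1 x)), ?_⟩
  rw [hu_eq]
  exact hu

theorem MemPLog.exists_interpolation {n : ℕ} {p : Rn n → ℝ≥0∞} (hp : MemPLog p) {θ a b : ℝ}
    (hθ0 : 0 < θ) (hθ1 : θ ≤ 1) (ha : (1 - θ) / 2 < a) (hb : b < (1 + θ) / 2)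
    (hbounds : ∀ x, a ≤ ((p x)⁻¹).toReal ∧ ((p x)⁻¹).toReal ≤ b) :
    ∃ pt : Rn n → ℝ≥0∞, MemPLog pt ∧
      0 < ⨅ x, (pt x)⁻¹ ∧ (⨆ x, (pt x)⁻¹) < 1 ∧
      ∀ x, (p x)⁻¹ = ENNReal.ofReal ((1 - θ) / 2) + ENNReal.ofReal θ * (pt x)⁻¹ := by
  set t : Rn n → ℝ := fun x => ((p x)⁻¹).toReal
  set g : ℝ → ℝ := fun s => θ⁻¹ * (s - (1 - θ) / 2)
  have hg_mono : Monotone g := fun r s hrs =>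
    mul_le_mul_of_nonneg_left (sub_le_sub_right hrs _) (inv_nonneg.2 hθ0.le)
  have hga : 0 < g a := mul_pos (inv_pos.2 hθ0) (by linarith)
  have hgb : g b < 1 := by
    rw [← inv_mul_cancel₀ hθ0.ne']
    exact mul_lt_mul_of_pos_left (by linarith) (inv_pos.2 hθ0)
  have hg_lip : LipschitzWith ‖θ⁻¹‖₊ g := LipschitzWith.of_dist_le_mul fun r s => by
    simp only [g, Real.dist_eq, ← mul_sub, sub_sub_sub_cancel_right, abs_mul, coe_nnnorm,
      Real.norm_eq_abs, le_refl]
  have hqa : ∀ x, g a ≤ g (t x) := fun x => hg_mono (hbounds x).1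
  have hqb : ∀ x, g (t x) ≤ g b := fun x => hg_mono (hbounds x).2
  refine ⟨fun x => (ENNReal.ofReal (g (t x)))⁻¹, ?_, ?_, ?_, fun x => ?_⟩
  · refine memPLog_inv_ofReal ?_ (fun x => hga.le.trans (hqa x)) (fun x => (hqb x).trans hgb.le)
      ((memPLog_iff.1 hp).2.2.comp_lipschitzWith hg_lip (nnnorm_pos.2 (inv_ne_zero hθ0.ne')))
    exact hg_lip.continuous.measurable.comp hp.1.inv.ennreal_toReal
  · simp_rw [inv_inv]
    exact (ENNReal.ofReal_pos.2 hga).trans_le (le_iInf fun x => ENNReal.ofReal_le_ofReal (hqa x))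
  · simp_rw [inv_inv]
    exact (iSup_le fun x => ENNReal.ofReal_le_ofReal (hqb x)).trans_lt (ENNReal.ofReal_lt_one.2 hgb)
  · have hinterp : (1 - θ) / 2 + θ * g (t x) = t x := by
      simp only [g, mul_inv_cancel_left₀ hθ0.ne']
      ring
    rw [inv_inv, ← ENNReal.ofReal_mul hθ0.le,
      ← ENNReal.ofReal_add (by linarith) (mul_nonneg hθ0.le (hga.le.trans (hqa x))), hinterp,
      hp.ofReal_toReal_inv]

theorem exists_interpolation_exponent_general
    (n : ℕ) (α : ℝ) (hα : 1 - (n : ℝ)/2 < α ∧ α < 1)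
    (p : Rn n → ℝ≥0∞) (hp : MemPLog p)
    (hlow : ENNReal.ofReal ((n : ℝ)/((n : ℝ) - 1 + α)) < essInf p volume)
    (hhigh : essSup p volume < ENNReal.ofReal ((n : ℝ)/(1 - α))) :
    ∃ (θ : ℝ) (pt : Rn n → ℝ≥0∞),
      0 < θ ∧ θ < 1 - 2/(n : ℝ) + 2 * α/(n : ℝ) ∧
      MemPLog pt ∧
      0 < ⨅ x : Rn n, (pt x)⁻¹ ∧ (⨆ x : Rn n, (pt x)⁻¹) < 1 ∧
      ∀ x, (p x)⁻¹ = ENNReal.ofReal ((1 - θ)/2) + ENNReal.ofReal θ * (pt x)⁻¹ := by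
  obtain ⟨hα₀, hα₁⟩ := hα
  have hn : (0 : ℝ) < n := by
    rcases Nat.eq_zero_or_pos n with rfl | hn
    · norm_num at hα₀; linarith
    · exact_mod_cast hn
  obtain ⟨a, b, ha, hb, hbounds⟩ :=
    hp.exists_inv_bounds (div_pos hn (by linarith)) hlow hhigh
  rw [inv_div] at ha hb
  have hΘa : 1 - 2/(n : ℝ) + 2 * α/(n : ℝ) = 1 - 2 * ((1 - α) / n) := by ring
  have hΘb : 1 - 2/(n : ℝ) + 2 * α/(n : ℝ) = 2 * ((n - 1 + α) / n) - 1 := by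
    field_simp; ring
  have hΘ₀ : 0 < (1 - α) / n := div_pos (by linarith) hn
  have hΘ₁ : (1 - α) / n < 1 / 2 := (div_lt_iff₀ hn).2 (by linarith)
  obtain ⟨θ, hθ, hθΘ⟩ : ∃ θ, max (max 0 (1 - 2 * a)) (2 * b - 1) < θ ∧
      θ < 1 - 2/(n : ℝ) + 2 * α/(n : ℝ) :=
    exists_between (max_lt (max_lt (by linarith) (by linarith)) (by linarith))
  simp only [max_lt_iff] at hθ
  obtain ⟨pt, hpt⟩ := hp.exists_interpolation hθ.1.1 (by linarith) (by linarith) (by linarith)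
    hbounds
  exact ⟨θ, pt, hθ.1.1, hθΘ, hpt⟩

/-- Lemma 3.3. Let `n ≥ 2`, `1 - n/2 < α < 1`, and let `p ∈ P^log(ℝⁿ)` with
`n/(n-1+α) < p⁻ ≤ p⁺ < n/(1-α)`. Then there exist `θ` with `0 < θ < 1 - 2/n + 2α/n` and a
variable exponent `pt ∈ P^log(ℝⁿ)` with `0 < inf 1/pt ≤ sup 1/pt < 1`, such that
`1/p(x) = (1-θ)/2 + θ/pt(x)` for all `x`. -/
theorem exists_interpolation_exponent
    (n : ℕ) (hn : 2 ≤ n) (α : ℝ) (hα : 1 - (n : ℝ)/2 < α ∧ α < 1)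
    (p : Rn n → ℝ≥0∞) (hp : MemPLog p)
    (hlow : ENNReal.ofReal ((n : ℝ)/((n : ℝ) - 1 + α)) < essInf p volume)
    (hhigh : essSup p volume < ENNReal.ofReal ((n : ℝ)/(1 - α))) :
    ∃ (θ : ℝ) (pt : Rn n → ℝ≥0∞),
      0 < θ ∧ θ < 1 - 2/(n : ℝ) + 2 * α/(n : ℝ) ∧
      MemPLog pt ∧
      0 < ⨅ x : Rn n, (pt x)⁻¹ ∧ (⨆ x : Rn n, (pt x)⁻¹) < 1 ∧
      ∀ x, (p x)⁻¹ = ENNReal.ofReal ((1 - θ)/2) + ENNReal.ofReal θ * (pt x)⁻¹ :=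
  exists_interpolation_exponent_general n α hα p hp hlow hhigh
end
end
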